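/- arXiv:2501.14580 — 8 statements merged into one kernel-verified Lean document; each statement's English description precedes it below -/
import Mathlib

section
/- Let (a_n) be a sequence of positive integers with 0 < a_0 ≤ a_1, a_n = a_{n-1} + a_{n-2} for n ≥ 2, and χ := a_0² + a_1 a_0 − a_1² > 0. Then for all n ≥ 0, 1/a_{2n+1} − 1/a_{2n+2} − 1/a_{2n+3} = χ/(a_{2n+1} a_{2n+2} a_{2n+3}) > 0. -/
/-!
For a Fibonacci-type sequence the quadratic form `q(x, y) = x² + x y - y²` changes sign at every
step, `q(a (n+1), a (n+2)) = -q(a n, a (n+1))`, so `q(a (2n+1), a (2n+2)) = -χ`. With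
`z = x + y`, clearing denominators in `1/x - 1/y - 1/z` leaves exactly `-q(x, y)` on top.
-/

theorem sq_add_mul_sub_sq_of_add_rec {R : Type*} [CommRing R] {a : ℕ → R}
    (hrec : ∀ n, a (n + 2) = a (n + 1) + a n) (n : ℕ) :
    a n ^ 2 + a n * a (n + 1) - a (n + 1) ^ 2
      = (-1) ^ n * (a 0 ^ 2 + a 0 * a 1 - a 1 ^ 2) := by
  induction n with
  | zero => ring
  | succ n ih =>
    rw [hrec n]
    linear_combination -ih

theorem pos_succ_of_add_rec {a : ℕ → ℕ} (hrec : ∀ n, a (n + 2) = a (n + 1) + a n)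
    (h1 : 0 < a 1) (n : ℕ) : 0 < a (n + 1) := by
  induction n with
  | zero => exact h1
  | succ n ih => rw [hrec]; exact Nat.add_pos_left ih _

theorem one_div_sub_one_div_sub_one_div_add {K : Type*} [Field K] {x y : K}
    (hx : x ≠ 0) (hy : y ≠ 0) (hxy : x + y ≠ 0) :
    1 / x - 1 / y - 1 / (x + y) = -(x ^ 2 + x * y - y ^ 2) / (x * y * (x + y)) := by
  field_simp
  ring

theorem recip_odd_identity (a : ℕ → ℕ) (ha0 : 0 < a 0) (h01 : a 0 ≤ a 1)
    (hrec : ∀ n : ℕ, a (n + 2) = a (n + 1) + a n)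
    (χ : ℤ) (hχ : χ = (a 0 : ℤ) ^ 2 + (a 1 : ℤ) * a 0 - (a 1 : ℤ) ^ 2) (hχpos : 0 < χ) :
    ∀ n : ℕ,
      (1 / (a (2 * n + 1) : ℝ) - 1 / (a (2 * n + 2) : ℝ) - 1 / (a (2 * n + 3) : ℝ)
        = (χ : ℝ) / ((a (2 * n + 1) : ℝ) * (a (2 * n + 2) : ℝ) * (a (2 * n + 3) : ℝ))) ∧
      0 < 1 / (a (2 * n + 1) : ℝ) - 1 / (a (2 * n + 2) : ℝ) - 1 / (a (2 * n + 3) : ℝ) := by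
  intro n
  have hrecℝ : ∀ n, (a (n + 2) : ℝ) = a (n + 1) + a n := fun n => mod_cast hrec n
  have hpos : ∀ n, (0 : ℝ) < a (n + 1) :=
    fun n => mod_cast pos_succ_of_add_rec hrec (ha0.trans_le h01) n
  have hz : (a (2 * n + 3) : ℝ) = a (2 * n + 1) + a (2 * n + 2) := by
    rw [hrecℝ (2 * n + 1), add_comm]
  have hform : -((a (2 * n + 1) : ℝ) ^ 2 + a (2 * n + 1) * a (2 * n + 2) - a (2 * n + 2) ^ 2)
      = χ := by
    have hq := sq_add_mul_sub_sq_of_add_rec (a := fun k => (a k : ℝ)) hrecℝ (2 * n + 1)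
    rw [(odd_two_mul_add_one n).neg_one_pow] at hq
    rw [hq, hχ]
    push_cast
    ring
  have hid : 1 / (a (2 * n + 1) : ℝ) - 1 / (a (2 * n + 2) : ℝ) - 1 / (a (2 * n + 3) : ℝ)
      = (χ : ℝ) / ((a (2 * n + 1) : ℝ) * (a (2 * n + 2) : ℝ) * (a (2 * n + 3) : ℝ)) := by
    rw [hz, one_div_sub_one_div_sub_one_div_add (hpos _).ne' (hpos _).ne'
      (hz ▸ (hpos _).ne'), hform]
  refine ⟨hid, hid ▸ div_pos (mod_cast hχpos) ?_⟩
  exact mul_pos (mul_pos (hpos _) (hpos _)) (hpos _)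
end

section
/- Let (a_n) be a sequence of positive integers with 0 < a_0 ≤ a_1, a_n = a_{n-1} + a_{n-2} for n ≥ 2, and χ := a_0² + a_1 a_0 − a_1² > 0. Then for all n ≥ 0, 1/a_{2n+3} + 1/a_{2n+4} − 1/a_{2n+2} = χ/(a_{2n+2} a_{2n+3} a_{2n+4}) > 0. -/
/-!
The quadratic form `Q n = a n ^ 2 + a (n + 1) * a n - a (n + 1) ^ 2` changes sign at each step of a
Fibonacci-type recurrence, so `Q (2 * n) = χ` for all `n`. Clearing denominators with
`a (2n+4) = a (2n+3) + a (2n+2)`, the numerator of the left-hand side is exactly `Q (2n+2)`.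
-/

section CassiniForm

variable {R : Type*} [CommRing R] {a : ℕ → R}

def cassiniForm (a : ℕ → R) (n : ℕ) : R :=
  a n ^ 2 + a (n + 1) * a n - a (n + 1) ^ 2

theorem cassiniForm_succ (hrec : ∀ n, a (n + 2) = a (n + 1) + a n) (n : ℕ) :
    cassiniForm a (n + 1) = -cassiniForm a n := by
  simp only [cassiniForm, hrec]
  ring

theorem cassiniForm_two_mul (hrec : ∀ n, a (n + 2) = a (n + 1) + a n) (n : ℕ) :
    cassiniForm a (2 * n) = cassiniForm a 0 := by
  induction n with
  | zero => rfl
  | succ n ih =>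
    rw [Nat.mul_succ, cassiniForm_succ hrec, cassiniForm_succ hrec, neg_neg, ih]

end CassiniForm

theorem one_div_add_one_div_add_sub_one_div {K : Type*} [Field K] {x y : K}
    (hx : x ≠ 0) (hy : y ≠ 0) (hxy : y + x ≠ 0) :
    1 / y + 1 / (y + x) - 1 / x = (x ^ 2 + y * x - y ^ 2) / (x * y * (y + x)) := by
  field_simp
  ring

theorem pos_add_two_of_fib_rec {a : ℕ → ℕ} (ha0 : 0 < a 0)
    (hrec : ∀ n, a (n + 2) = a (n + 1) + a n) (k : ℕ) : 0 < a (k + 2) := by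
  induction k with
  | zero => rw [hrec]; omega
  | succ k ih => rw [hrec (k + 1)]; exact Nat.add_pos_left ih _

theorem recip_even_identity_general (a : ℕ → ℕ) (ha0 : 0 < a 0)
    (hrec : ∀ n : ℕ, a (n + 2) = a (n + 1) + a n)
    (χ : ℤ) (hχ : χ = (a 0 : ℤ) ^ 2 + (a 1 : ℤ) * a 0 - (a 1 : ℤ) ^ 2) (hχpos : 0 < χ) :
    ∀ n : ℕ,
      (1 / (a (2 * n + 3) : ℝ) + 1 / (a (2 * n + 4) : ℝ) - 1 / (a (2 * n + 2) : ℝ)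
        = (χ : ℝ) / ((a (2 * n + 2) : ℝ) * (a (2 * n + 3) : ℝ) * (a (2 * n + 4) : ℝ))) ∧
      0 < 1 / (a (2 * n + 3) : ℝ) + 1 / (a (2 * n + 4) : ℝ) - 1 / (a (2 * n + 2) : ℝ) := by
  intro n
  set b : ℕ → ℝ := fun k => a k
  have hrecR : ∀ k, b (k + 2) = b (k + 1) + b k := fun k => by
    simp only [b, hrec k, Nat.cast_add]
  have hpos : ∀ k, 0 < b (k + 2) := fun k =>
    Nat.cast_pos.mpr (pos_add_two_of_fib_rec ha0 hrec k)
  have hQ : cassiniForm b (2 * n + 2) = χ := by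
    rw [← Nat.mul_succ, cassiniForm_two_mul hrecR, hχ]
    simp only [cassiniForm, b, Int.cast_sub, Int.cast_add, Int.cast_mul, Int.cast_pow,
      Int.cast_natCast]
  have key : 1 / b (2 * n + 3) + 1 / b (2 * n + 4) - 1 / b (2 * n + 2)
      = χ / (b (2 * n + 2) * b (2 * n + 3) * b (2 * n + 4)) := by
    rw [hrecR (2 * n + 2), ← hQ]
    exact one_div_add_one_div_add_sub_one_div (hpos _).ne' (hpos _).ne'
      (add_pos (hpos _) (hpos _)).ne'
  refine ⟨key, ?_⟩
  rw [key]
  exact div_pos (Int.cast_pos.mpr hχpos) (mul_pos (mul_pos (hpos _) (hpos _)) (hpos _))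

theorem recip_even_identity (a : ℕ → ℕ) (ha0 : 0 < a 0) (h01 : a 0 ≤ a 1)
    (hrec : ∀ n : ℕ, a (n + 2) = a (n + 1) + a n)
    (χ : ℤ) (hχ : χ = (a 0 : ℤ) ^ 2 + (a 1 : ℤ) * a 0 - (a 1 : ℤ) ^ 2) (hχpos : 0 < χ) :
    ∀ n : ℕ,
      (1 / (a (2 * n + 3) : ℝ) + 1 / (a (2 * n + 4) : ℝ) - 1 / (a (2 * n + 2) : ℝ)
        = (χ : ℝ) / ((a (2 * n + 2) : ℝ) * (a (2 * n + 3) : ℝ) * (a (2 * n + 4) : ℝ))) ∧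
      0 < 1 / (a (2 * n + 3) : ℝ) + 1 / (a (2 * n + 4) : ℝ) - 1 / (a (2 * n + 2) : ℝ) :=
  recip_even_identity_general a ha0 hrec χ hχ hχpos
end

section
/- Let (a_n) be a sequence of positive integers with 0 < a_0 ≤ a_1 and a_n = a_{n-1} + a_{n-2} for n ≥ 2. Then for all n ≥ 0, 1/a_{2n+2} − 1/a_{2n+3} − 1/a_{2n+5} > 0. -/
/-!
Write `x = a (2n)` and `y = a (2n+1)`. The recurrence gives `a (2n+2) = x + y`,
`a (2n+3) = x + 2y` and `a (2n+5) = 3x + 5y`, and the sequence is nondecreasing, so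
`0 ≤ x ≤ y`. Over a common denominator the expression is
`(3y² - x²) / ((x + y)(x + 2y)(3x + 5y))`, which is positive.
-/

theorem monotone_of_add_rec {a : ℕ → ℕ} (h01 : a 0 ≤ a 1)
    (hrec : ∀ n, a (n + 2) = a (n + 1) + a n) : Monotone a := by
  refine monotone_nat_of_le_succ fun n => ?_
  cases n with
  | zero => exact h01
  | succ m => rw [hrec m]; exact Nat.le_add_right _ _

theorem one_div_sub_one_div_sub_one_div_pos {K : Type*} [Field K] [LinearOrder K]
    [IsStrictOrderedRing K] {x y : K} (hx : 0 ≤ x) (hxy : x ≤ y) (hy : 0 < y) :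
    0 < 1 / (x + y) - 1 / (x + 2 * y) - 1 / (3 * x + 5 * y) := by
  have h1 : 0 < x + y := by positivity
  have h2 : 0 < x + 2 * y := by positivity
  have h3 : 0 < 3 * x + 5 * y := by positivity
  have key : 0 < 3 * y ^ 2 - x ^ 2 := by nlinarith
  have hexp : 1 / (x + y) - 1 / (x + 2 * y) - 1 / (3 * x + 5 * y)
      = (3 * y ^ 2 - x ^ 2) / ((x + y) * (x + 2 * y) * (3 * x + 5 * y)) := by
    field_simp
    ring
  rw [hexp]
  positivity

theorem one_div_sub_one_div_sub_one_div_pos_of_add_rec {a : ℕ → ℕ}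
    (hrec : ∀ n, a (n + 2) = a (n + 1) + a n) {m : ℕ} (hle : a m ≤ a (m + 1))
    (hpos : 0 < a (m + 1)) :
    0 < 1 / (a (m + 2) : ℝ) - 1 / (a (m + 3) : ℝ) - 1 / (a (m + 5) : ℝ) := by
  have e2 : (a (m + 2) : ℝ) = a m + a (m + 1) := by rw [hrec m]; push_cast; ring
  have e3 : (a (m + 3) : ℝ) = a m + 2 * a (m + 1) := by
    rw [hrec (m + 1), hrec m]; push_cast; ring
  have e5 : (a (m + 5) : ℝ) = 3 * a m + 5 * a (m + 1) := by
    rw [hrec (m + 3), hrec (m + 2), hrec (m + 1), hrec m]; push_cast; ring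
  rw [e2, e3, e5]
  exact one_div_sub_one_div_sub_one_div_pos (Nat.cast_nonneg _) (by exact_mod_cast hle)
    (by exact_mod_cast hpos)

theorem recip_skip_pos (a : ℕ → ℕ) (ha0 : 0 < a 0) (h01 : a 0 ≤ a 1)
    (hrec : ∀ n : ℕ, a (n + 2) = a (n + 1) + a n) :
    ∀ n : ℕ,
      0 < 1 / (a (2 * n + 2) : ℝ) - 1 / (a (2 * n + 3) : ℝ) - 1 / (a (2 * n + 5) : ℝ) := by
  have hmono := monotone_of_add_rec h01 hrec
  intro n
  exact one_div_sub_one_div_sub_one_div_pos_of_add_rec hrec (hmono (Nat.le_succ _))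
    (ha0.trans_le (hmono (Nat.zero_le _)))
end

section
/- Let (a_n) be a sequence of positive integers with 0 < a_0 ≤ a_1, a_n = a_{n-1} + a_{n-2} for n ≥ 2, and χ := a_0² + a_1 a_0 − a_1² > 0. Let n ≥ 0 and let k ≥ 0 satisfy a_{2n+2} F_k + a_{2n+3} F_{k+1} ≤ a_{2n+2} a_{2n+3} a_{2n+4} / χ (equivalently χ · a_{2n+3+k} ≤ a_{2n+2} a_{2n+3} a_{2n+4}). Then 1/a_{2n+3} + 1/a_{2n+4} ≤ 1/a_{2n+2} + 1/a_{2n+3+k}. -/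
/-!
Writing `b = a (2n+2)`, `c = a (2n+3)`, so that `a (2n+4) = c + b`, one has
`1/c + 1/(c+b) - 1/b = (b² + bc - c²) / (bc(c+b))`. The form `x² + xy - y²` evaluated at
consecutive terms changes sign at each step of the recurrence, so at the even index `2n+2` it
equals `χ`. Since `a (2n+3+k) = b F_k + c F_{k+1}`, the hypothesis says exactly that
`χ / (bc(c+b)) ≤ 1 / a (2n+3+k)`.
-/

section FibonacciRecurrence

variable {R : Type*} (a : ℕ → R)

theorem fib_rec_add_succ [CommSemiring R] (hrec : ∀ n, a (n + 2) = a (n + 1) + a n) (m j : ℕ) :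
    a (m + j + 1) = a m * Nat.fib j + a (m + 1) * Nat.fib (j + 1) := by
  induction j using Nat.twoStepInduction with
  | zero => simp
  | one => rw [hrec]; simp [add_comm]
  | more j ih₀ ih₁ =>
    rw [show m + (j + 2) + 1 = m + j + 1 + 2 by omega, hrec, show m + j + 1 + 1 = m + (j + 1) + 1
      by omega, ih₀, ih₁]
    simp only [Nat.fib_add_two, Nat.cast_add]
    ring

theorem fib_rec_form_succ [CommRing R] (hrec : ∀ n, a (n + 2) = a (n + 1) + a n) (n : ℕ) :
    a (n + 1) ^ 2 + a (n + 1) * a (n + 2) - a (n + 2) ^ 2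
      = -(a n ^ 2 + a n * a (n + 1) - a (n + 1) ^ 2) := by
  rw [hrec]
  ring

theorem fib_rec_form_eq_neg_one_pow [CommRing R] (hrec : ∀ n, a (n + 2) = a (n + 1) + a n)
    (n : ℕ) :
    a n ^ 2 + a n * a (n + 1) - a (n + 1) ^ 2 = (-1) ^ n * (a 0 ^ 2 + a 0 * a 1 - a 1 ^ 2) := by
  induction n with
  | zero => simp
  | succ n ih => rw [fib_rec_form_succ a hrec, ih, pow_succ]; ring

end FibonacciRecurrence

theorem fib_rec_pos (a : ℕ → ℕ) (ha0 : 0 < a 0) (hrec : ∀ n, a (n + 2) = a (n + 1) + a n)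
    {m : ℕ} (hm : 2 ≤ m) : 0 < a m := by
  obtain ⟨m, rfl⟩ := Nat.exists_eq_add_of_le' hm
  induction m with
  | zero => rw [hrec]; omega
  | succ m ih => rw [hrec, show m + 1 + 1 = m + 2 by rfl]; omega

theorem one_div_add_one_div_add_le {K : Type*} [Field K] [LinearOrder K] [IsStrictOrderedRing K]
    {b c x : K} (hb : 0 < b) (hc : 0 < c) (hx : 0 < x)
    (h : (b ^ 2 + b * c - c ^ 2) * x ≤ b * c * (c + b)) :
    1 / c + 1 / (c + b) ≤ 1 / b + 1 / x := by
  have key : 1 / c + 1 / (c + b) - 1 / b = (b ^ 2 + b * c - c ^ 2) / (b * c * (c + b)) := by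
    field_simp
    ring
  have hle : (b ^ 2 + b * c - c ^ 2) / (b * c * (c + b)) ≤ 1 / x := by
    rw [div_le_div_iff₀ (by positivity) hx]
    linarith
  linarith

theorem greedy_ineq_general (a : ℕ → ℕ) (ha0 : 0 < a 0)
    (hrec : ∀ n : ℕ, a (n + 2) = a (n + 1) + a n)
    (χ : ℤ) (hχ : χ = (a 0 : ℤ) ^ 2 + (a 1 : ℤ) * a 0 - (a 1 : ℤ) ^ 2)
    (n k : ℕ)
    (hk : χ * ((a (2 * n + 2) : ℤ) * Nat.fib k + (a (2 * n + 3) : ℤ) * Nat.fib (k + 1))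
      ≤ (a (2 * n + 2) : ℤ) * (a (2 * n + 3) : ℤ) * (a (2 * n + 4) : ℤ)) :
    1 / (a (2 * n + 3) : ℝ) + 1 / (a (2 * n + 4) : ℝ)
      ≤ 1 / (a (2 * n + 2) : ℝ) + 1 / (a (2 * n + 3 + k) : ℝ) := by
  have hrecℝ : ∀ m, (a (m + 2) : ℝ) = a (m + 1) + a m := fun m => mod_cast hrec m
  have hpos {m : ℕ} (hm : 2 ≤ m) : (0 : ℝ) < a m := mod_cast fib_rec_pos a ha0 hrec hm
  have hχℝ : (χ : ℝ) = (a (2 * n + 2) : ℝ) ^ 2 + a (2 * n + 2) * a (2 * n + 3)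
      - (a (2 * n + 3) : ℝ) ^ 2 := by
    rw [fib_rec_form_eq_neg_one_pow (fun m => (a m : ℝ)) hrecℝ, hχ,
      (show Even (2 * n + 2) by exact ⟨n + 1, by ring⟩).neg_one_pow]
    push_cast
    ring
  have hx : (a (2 * n + 3 + k) : ℝ)
      = a (2 * n + 2) * Nat.fib k + a (2 * n + 3) * Nat.fib (k + 1) := by
    rw [show 2 * n + 3 + k = 2 * n + 2 + k + 1 by omega]
    exact_mod_cast fib_rec_add_succ a hrec (2 * n + 2) k
  have hkℝ : (χ : ℝ) * a (2 * n + 3 + k) ≤ a (2 * n + 2) * a (2 * n + 3) * a (2 * n + 4) := by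
    rw [hx]
    exact_mod_cast hk
  rw [hrecℝ (2 * n + 2)] at hkℝ ⊢
  rw [hχℝ] at hkℝ
  exact one_div_add_one_div_add_le (hpos (by omega)) (hpos (by omega)) (hpos (by omega)) hkℝ

theorem greedy_ineq (a : ℕ → ℕ) (ha0 : 0 < a 0) (h01 : a 0 ≤ a 1)
    (hrec : ∀ n : ℕ, a (n + 2) = a (n + 1) + a n)
    (χ : ℤ) (hχ : χ = (a 0 : ℤ) ^ 2 + (a 1 : ℤ) * a 0 - (a 1 : ℤ) ^ 2) (hχpos : 0 < χ)
    (n k : ℕ)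
    (hk : χ * ((a (2 * n + 2) : ℤ) * Nat.fib k + (a (2 * n + 3) : ℤ) * Nat.fib (k + 1))
      ≤ (a (2 * n + 2) : ℤ) * (a (2 * n + 3) : ℤ) * (a (2 * n + 4) : ℤ)) :
    1 / (a (2 * n + 3) : ℝ) + 1 / (a (2 * n + 4) : ℝ)
      ≤ 1 / (a (2 * n + 2) : ℝ) + 1 / (a (2 * n + 3 + k) : ℝ) :=
  greedy_ineq_general a ha0 hrec χ hχ n k hk
end

section
/- For all n ≥ 0, F_{6n+8} ≤ F_{2n+3} F_{2n+4} F_{2n+5} < F_{6n+9}, where F is the Fibonacci sequence. -/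
/-!
Put `a = F_k` and `b = F_{k+1}`. The addition formula `F_{m+n+1} = F_m F_n + F_{m+1} F_{n+1}`
turns every term into a cubic form in `a` and `b`:
`F_{3k+2} = a³ + 3ab² + b³`, `F_{k+1} F_{k+2} F_{k+3} = a²b + 3ab² + 2b³` and
`F_{3k+3} = 3a²b + 3ab² + 2b³`. The two gaps are `a²b + b³ - a³ ≥ 0` (as `a ≤ b`) and
`2a²b > 0` (as `a, b > 0` for `k ≥ 1`). The theorem is the case `k = 2n + 2`.
-/

open Nat

lemma fib_three_mul_add_two (k : ℕ) :
    fib (3 * k + 2) = fib k ^ 3 + 3 * fib k * fib (k + 1) ^ 2 + fib (k + 1) ^ 3 := by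
  have h := fib_add (2 * k + 1) k
  rw [show 2 * k + 1 + k + 1 = 3 * k + 2 by ring, show 2 * k + 1 + 1 = 2 * k + 2 by ring,
    fib_two_mul_add_one, fib_two_mul_add_two] at h
  rw [h]
  ring

lemma fib_three_mul_add_three (k : ℕ) :
    fib (3 * k + 3) =
      3 * fib k ^ 2 * fib (k + 1) + 3 * fib k * fib (k + 1) ^ 2 + 2 * fib (k + 1) ^ 3 := by
  have h := fib_add (2 * k + 2) k
  have h2 : fib (k + 2) = fib k + fib (k + 1) := fib_add_two
  rw [show 2 * k + 2 + k + 1 = 3 * k + 3 by ring, show 2 * k + 2 + 1 = 2 * (k + 1) + 1 by ring,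
    fib_two_mul_add_one, fib_two_mul_add_two, h2] at h
  rw [h]
  ring

lemma fib_succ_mul_fib_add_two_mul_fib_add_three (k : ℕ) :
    fib (k + 1) * fib (k + 2) * fib (k + 3) =
      fib k ^ 2 * fib (k + 1) + 3 * fib k * fib (k + 1) ^ 2 + 2 * fib (k + 1) ^ 3 := by
  have h2 : fib (k + 2) = fib k + fib (k + 1) := fib_add_two
  have h3 : fib (k + 3) = fib (k + 1) + fib (k + 2) := fib_add_two
  rw [h3, h2]
  ring

lemma fib_three_mul_add_two_le_fib_prod (k : ℕ) :
    fib (3 * k + 2) ≤ fib (k + 1) * fib (k + 2) * fib (k + 3) := by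
  rw [fib_three_mul_add_two, fib_succ_mul_fib_add_two_mul_fib_add_three]
  have hcube : fib k ^ 3 ≤ fib (k + 1) ^ 3 := Nat.pow_le_pow_left fib_le_fib_succ 3
  linarith [Nat.zero_le (fib k ^ 2 * fib (k + 1))]

lemma fib_prod_lt_fib_three_mul_add_three {k : ℕ} (hk : 0 < k) :
    fib (k + 1) * fib (k + 2) * fib (k + 3) < fib (3 * k + 3) := by
  rw [fib_three_mul_add_three, fib_succ_mul_fib_add_two_mul_fib_add_three]
  have hpos : 0 < fib k ^ 2 * fib (k + 1) :=
    Nat.mul_pos (pow_pos (fib_pos.2 hk) 2) (fib_pos.2 k.succ_pos)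
  linarith

theorem fib_prod_bounds (n : ℕ) :
    Nat.fib (6 * n + 8) ≤ Nat.fib (2 * n + 3) * Nat.fib (2 * n + 4) * Nat.fib (2 * n + 5) ∧
    Nat.fib (2 * n + 3) * Nat.fib (2 * n + 4) * Nat.fib (2 * n + 5) < Nat.fib (6 * n + 9) := by
  have lower := fib_three_mul_add_two_le_fib_prod (2 * n + 2)
  have upper := fib_prod_lt_fib_three_mul_add_three (k := 2 * n + 2) (by omega)
  rw [show 3 * (2 * n + 2) + 2 = 6 * n + 8 by ring] at lower
  rw [show 3 * (2 * n + 2) + 3 = 6 * n + 9 by ring] at upper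
  exact ⟨lower, upper⟩
end

section
/- For every n ≥ 0, the largest nonnegative integer ξ such that F_{2n+3} F_ξ + F_{2n+4} F_{ξ+1} ≤ F_{2n+3} F_{2n+4} F_{2n+5} is ξ = 4n + 4. -/
/-!
Writing `a = F_{k+1}` and `b = F_{k+2}`, the doubling and addition formulas express
`F_{3k+5}`, `F_{3k+6}` and `F_{k+2} F_{k+3} F_{k+4}` as cubics in `a, b`; comparing them,
the product lies in `[F_{3k+5}, F_{3k+6})` because `a ≤ b` and `0 < a`. The addition formula turns
`F_m F_ξ + F_{m+1} F_{ξ+1}` into `F_{m+ξ+1}`, so with `m = k + 2 = 2n + 3` the largest admissible `ξ`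
is the one with `m + ξ + 1 = 3k + 5`.
-/

namespace Nat

theorem isGreatest_fib_mul_add_fib_succ_mul_le {m j N : ℕ} (hle : fib (m + j + 1) ≤ N)
    (hlt : N < fib (m + j + 2)) :
    IsGreatest {ξ : ℕ | fib m * fib ξ + fib (m + 1) * fib (ξ + 1) ≤ N} j := by
  simp only [← fib_add]
  refine ⟨hle, fun ξ hξ => ?_⟩
  have := fib_mono.reflect_lt ((show fib (m + ξ + 1) ≤ N from hξ).trans_lt hlt)
  omega

section Cubic

variable (k : ℕ)

theorem fib_three_mul_add_five :
    fib (3 * k + 5) = fib (k + 1) ^ 3 + 3 * fib (k + 1) * fib (k + 2) ^ 2 + fib (k + 2) ^ 3 := by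
  have h := fib_add (k + 1) (2 * (k + 1) + 1)
  rw [fib_two_mul_add_one, show 2 * (k + 1) + 1 + 1 = 2 * (k + 1) + 2 by ring,
    fib_two_mul_add_two, show k + 1 + (2 * (k + 1) + 1) + 1 = 3 * k + 5 by ring] at h
  rw [h]
  ring

theorem fib_three_mul_add_six :
    fib (3 * k + 6) =
      3 * fib (k + 1) ^ 2 * fib (k + 2) + 3 * fib (k + 1) * fib (k + 2) ^ 2 + 2 * fib (k + 2) ^ 3 := by
  have h := fib_add (k + 2) (2 * (k + 1) + 1)
  rw [fib_two_mul_add_one, show 2 * (k + 1) + 1 + 1 = 2 * (k + 1) + 2 by ring,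
    fib_two_mul_add_two, show k + 2 + (2 * (k + 1) + 1) + 1 = 3 * k + 6 by ring] at h
  rw [h, show fib (k + 2 + 1) = fib (k + 1) + fib (k + 2) from fib_add_two]
  ring

theorem fib_mul_fib_mul_fib :
    fib (k + 2) * fib (k + 3) * fib (k + 4) =
      fib (k + 2) * (fib (k + 1) + fib (k + 2)) * (fib (k + 1) + 2 * fib (k + 2)) := by
  have h3 : fib (k + 3) = fib (k + 1) + fib (k + 2) := fib_add_two
  have h4 : fib (k + 4) = fib (k + 2) + fib (k + 3) := fib_add_two
  rw [h4, h3]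
  ring

theorem fib_three_mul_add_five_le_fib_mul_fib_mul_fib :
    fib (3 * k + 5) ≤ fib (k + 2) * fib (k + 3) * fib (k + 4) := by
  have hab : fib (k + 1) ≤ fib (k + 2) := fib_mono (by omega)
  rw [fib_three_mul_add_five, fib_mul_fib_mul_fib]
  nlinarith [mul_le_mul hab hab (Nat.zero_le _) (Nat.zero_le _)]

theorem fib_mul_fib_mul_fib_lt_fib_three_mul_add_six :
    fib (k + 2) * fib (k + 3) * fib (k + 4) < fib (3 * k + 6) := by
  have ha : 0 < fib (k + 1) := fib_pos.mpr (by omega)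
  have hb : 0 < fib (k + 2) := fib_pos.mpr (by omega)
  rw [fib_three_mul_add_six, fib_mul_fib_mul_fib]
  nlinarith [mul_pos (mul_pos ha ha) hb]

end Cubic

end Nat

theorem fib_xi_value (n : ℕ) :
    IsGreatest {ξ : ℕ |
      Nat.fib (2 * n + 3) * Nat.fib ξ + Nat.fib (2 * n + 4) * Nat.fib (ξ + 1)
        ≤ Nat.fib (2 * n + 3) * Nat.fib (2 * n + 4) * Nat.fib (2 * n + 5)}
      (4 * n + 4) := by
  have hle := Nat.fib_three_mul_add_five_le_fib_mul_fib_mul_fib (2 * n + 1)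
  have hlt := Nat.fib_mul_fib_mul_fib_lt_fib_three_mul_add_six (2 * n + 1)
  refine Nat.isGreatest_fib_mul_add_fib_succ_mul_le ?_ ?_ <;>
    ring_nf at hle hlt ⊢ <;> assumption
end

section
/- For all n ≥ 0, 5 · L_{6n+11} ≤ L_{2n+4} L_{2n+5} L_{2n+6} < 5 · L_{6n+12}, where L is the Lucas sequence. -/
/-!
Binet's formula `L n = φ ^ n + ψ ^ n`, together with `φ ψ = -1`, gives
`L (m + k) L k = L (m + 2k) + (-1) ^ k L m`. Applied twice it yields
`L (2n+4) L (2n+5) L (2n+6) = L (6n+15) + L (2n+3) + L (2n+6)`.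
As `L (6n+15) = 5 L (6n+11) + 3 L (6n+10)` and `5 L (6n+12) = 5 L (6n+11) + 5 L (6n+10)`,
the lower bound is immediate and the upper one reduces to `L (2n+3) + L (2n+6) < 2 L (6n+10)`,
which holds since `L` is increasing from index 1 on.
-/

def lucas : ℕ → ℕ
  | 0 => 2
  | 1 => 1
  | n + 2 => lucas (n + 1) + lucas n

open Real goldenRatio

theorem lucas_add_two (n : ℕ) : lucas (n + 2) = lucas (n + 1) + lucas n := rfl

theorem lucas_pos : ∀ n, 0 < lucas n
  | 0 | 1 => by decide
  | n + 2 => Nat.add_pos_right _ (lucas_pos n)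

theorem strictMono_lucas_succ : StrictMono (fun n ↦ lucas (n + 1)) :=
  strictMono_nat_of_lt_succ fun n ↦ Nat.lt_add_of_pos_right (lucas_pos n)

theorem lucas_add_five (n : ℕ) : lucas (n + 5) = 5 * lucas (n + 1) + 3 * lucas n := by
  simp only [lucas_add_two]
  ring

theorem coe_lucas_eq : ∀ n, (lucas n : ℝ) = φ ^ n + ψ ^ n
  | 0 => by norm_num [lucas]
  | 1 => by simp [lucas, goldenRatio_add_goldenConj]
  | n + 2 => by
    rw [lucas_add_two, Nat.cast_add, coe_lucas_eq (n + 1), coe_lucas_eq n]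
    linear_combination (-φ ^ n) * goldenRatio_sq - ψ ^ n * goldenConj_sq

theorem lucas_add_mul_lucas (m k : ℕ) :
    (lucas (m + k) * lucas k : ℤ) = lucas (m + 2 * k) + (-1) ^ k * lucas m := by
  apply Int.cast_injective (α := ℝ)
  push_cast
  rw [← goldenRatio_mul_goldenConj, mul_pow]
  simp only [coe_lucas_eq]
  ring

theorem lucas_succ_mul_lucas_add_two_mul_lucas_add_three (a : ℕ) :
    (lucas (a + 1) * lucas (a + 2) * lucas (a + 3) : ℤ) =
      lucas (3 * a + 6) + (-1) ^ (a + 1) * (lucas a + lucas (a + 3)) := by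
  have h₁ := lucas_add_mul_lucas 1 (a + 1)
  have h₂ := lucas_add_mul_lucas a (a + 3)
  rw [show 1 + (a + 1) = a + 2 by ring, show 1 + 2 * (a + 1) = 2 * a + 3 by ring] at h₁
  rw [show a + (a + 3) = 2 * a + 3 by ring, show a + 2 * (a + 3) = 3 * a + 6 by ring] at h₂
  rw [mul_comm (lucas (a + 1) : ℤ), h₁, add_mul, h₂]
  simp only [lucas, Nat.cast_one, pow_add]
  ring

theorem lucas_prod_bounds (n : ℕ) :
    5 * lucas (6 * n + 11) ≤ lucas (2 * n + 4) * lucas (2 * n + 5) * lucas (2 * n + 6) ∧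
    lucas (2 * n + 4) * lucas (2 * n + 5) * lucas (2 * n + 6) < 5 * lucas (6 * n + 12) := by
  have hprod : lucas (2 * n + 4) * lucas (2 * n + 5) * lucas (2 * n + 6) =
      lucas (6 * n + 15) + (lucas (2 * n + 3) + lucas (2 * n + 6)) := by
    have h := lucas_succ_mul_lucas_add_two_mul_lucas_add_three (2 * n + 3)
    rw [Even.neg_one_pow ⟨n + 2, by ring⟩, one_mul] at h
    ring_nf at h ⊢
    exact_mod_cast h
  have h₃ : lucas (2 * n + 3) < lucas (6 * n + 10) :=
    strictMono_lucas_succ (by omega : 2 * n + 2 < 6 * n + 9)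
  have h₆ : lucas (2 * n + 6) ≤ lucas (6 * n + 10) :=
    strictMono_lucas_succ.monotone (by omega : 2 * n + 5 ≤ 6 * n + 9)
  have h₁₅ : lucas (6 * n + 15) = 5 * lucas (6 * n + 11) + 3 * lucas (6 * n + 10) :=
    lucas_add_five _
  have h₁₂ : lucas (6 * n + 12) = lucas (6 * n + 11) + lucas (6 * n + 10) := lucas_add_two _
  constructor <;> omega
end

section
/- Let (a_n) be a sequence of positive integers with 0 < a_0 ≤ a_1, a_n = a_{n-1} + a_{n-2} for n ≥ 2, and χ := a_0² + a_1 a_0 − a_1² > 0. Suppose θ ∈ (0,1] satisfies 1/a_{2m+3} + 1/a_{2m+4} < θ ≤ 1/a_{2m+2} + 1/a_{2m+3+ξ(m)} for some m ≥ 0, where ξ(m) is the largest nonnegative integer with χ · a_{2m+3+ξ(m)} ≤ a_{2m+2} a_{2m+3} a_{2m+4}. Then there exist indices 1 ≤ p ≤ q (namely p = 2m+3, q = 2m+4) such that 1/a_p + 1/a_q < θ and for the greedy indices g_1, g_2 of θ one has 1/a_{g_1} + 1/a_{g_2} < 1/a_p + 1/a_q; i.e., the greedy two-term underapproximation of θ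 is not optimal. -/
/-!
Cassini's identity `a n * a (n + 2) - a (n + 1) ^ 2 = (-1) ^ n * χ` rewrites as
`1 / a (n + 1) + 1 / a (n + 2) = 1 / a n + (-1) ^ n * χ / (a n * a (n + 1) * a (n + 2))`.
For the odd index `2m+1` this gives `θ < 1 / a (2m+1)`, and for the even index `2m+2` it gives
`1 / a (2m+2) < θ`, so the greedy algorithm picks `g₁ = 2m+2`. The upper bound on `θ` then forces
`g₂ > 2m+3+ξ`, and the maximality of `ξ` makes `1 / a g₂` smaller than the Cassini excess
`χ / (a (2m+2) * a (2m+3) * a (2m+4))`, so the greedy sum falls short of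
`1 / a (2m+3) + 1 / a (2m+4)`.
-/

namespace FibonacciType

variable {a : ℕ → ℕ}

def cassiniConst (a : ℕ → ℕ) : ℤ := a 0 ^ 2 + a 1 * a 0 - a 1 ^ 2

section

variable (hrec : ∀ n, a (n + 2) = a (n + 1) + a n)
include hrec

theorem pos (h0 : 0 < a 0) (h1 : 0 < a 1) (n : ℕ) : 0 < a n := by
  have h : ∀ n, 0 < a n ∧ 0 < a (n + 1) := by
    intro n
    induction n with
    | zero => exact ⟨h0, h1⟩
    | succ k ih => exact ⟨ih.2, by rw [hrec k]; omega⟩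
  exact (h n).1

theorem monotone (h01 : a 0 ≤ a 1) : Monotone a := by
  refine monotone_nat_of_le_succ fun n => ?_
  cases n with
  | zero => exact h01
  | succ k => rw [hrec k]; omega

theorem cassini (n : ℕ) :
    (a n : ℤ) * a (n + 2) - a (n + 1) ^ 2 = (-1) ^ n * cassiniConst a := by
  induction n with
  | zero =>
    have h2 : (a 2 : ℤ) = a 1 + a 0 := mod_cast hrec 0
    simp only [cassiniConst, h2]
    ring
  | succ k ih =>
    have h2 : (a (k + 2) : ℤ) = a (k + 1) + a k := mod_cast hrec k
    have h3 : (a (k + 3) : ℤ) = a (k + 2) + a (k + 1) := mod_cast hrec (k + 1)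
    show (a (k + 1) : ℤ) * a (k + 3) - a (k + 2) ^ 2 = (-1) ^ (k + 1) * cassiniConst a
    rw [pow_succ]
    linear_combination (a (k + 1) : ℤ) * h3 - (a (k + 2) : ℤ) * h2 - ih

theorem one_div_add_one_div (hpos : ∀ n, 0 < a n) (n : ℕ) :
    1 / (a (n + 1) : ℝ) + 1 / a (n + 2)
      = 1 / a n + (-1) ^ n * cassiniConst a / (a n * a (n + 1) * a (n + 2)) := by
  have h2 : (a (n + 2) : ℝ) = a (n + 1) + a n := mod_cast hrec n
  have hc : (a n : ℝ) * a (n + 2) - a (n + 1) ^ 2 = (-1) ^ n * cassiniConst a := by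
    exact_mod_cast cassini hrec n
  have := hpos n
  have := hpos (n + 1)
  have := hpos (n + 2)
  rw [← hc]
  field_simp
  linear_combination -(a (n + 1) : ℝ) * h2

theorem one_div_add_one_div_of_even (hpos : ∀ n, 0 < a n) {n : ℕ} (hn : Even n) :
    1 / (a (n + 1) : ℝ) + 1 / a (n + 2)
      = 1 / a n + cassiniConst a / (a n * a (n + 1) * a (n + 2)) := by
  rw [one_div_add_one_div hrec hpos, hn.neg_one_pow, one_mul]

theorem one_div_add_one_div_lt_of_odd (hpos : ∀ n, 0 < a n) (hχ : 0 < cassiniConst a)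
    {n : ℕ} (hn : Odd n) : 1 / (a (n + 1) : ℝ) + 1 / a (n + 2) < 1 / a n := by
  have hχ' : (0 : ℝ) < cassiniConst a := mod_cast hχ
  have := hpos n
  have := hpos (n + 1)
  have := hpos (n + 2)
  rw [one_div_add_one_div hrec hpos, hn.neg_one_pow, neg_one_mul, neg_div]
  linarith [show (0 : ℝ) < cassiniConst a / (a n * a (n + 1) * a (n + 2)) by positivity]

end

theorem antitone_one_div (hpos : ∀ n, 0 < a n) (hmono : Monotone a) :
    Antitone fun n => 1 / (a n : ℝ) :=
  fun _ _ hij => one_div_le_one_div_of_le (mod_cast hpos _) (mod_cast hmono hij)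

theorem one_div_lt_div_of_isGreatest (hpos : ∀ n, 0 < a n) (hmono : Monotone a) {χ P : ℤ}
    (hχ : 0 < χ) (hP : 0 < P) {i ξ g : ℕ} (hξ : IsGreatest {k | χ * a (i + k) ≤ P} ξ)
    (hg : i + ξ < g) : 1 / (a g : ℝ) < χ / P := by
  have hξ_succ : P < χ * a (i + (ξ + 1)) := not_le.mp fun h => by have := hξ.2 h; omega
  have hle : (a (i + (ξ + 1)) : ℤ) ≤ a g := mod_cast hmono (by omega)
  have hP_lt : (P : ℝ) < χ * a g := mod_cast hξ_succ.trans_le (mul_le_mul_of_nonneg_left hle hχ.le)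
  have := hpos g
  rw [div_lt_div_iff₀ (by positivity) (mod_cast hP)]
  linarith

end FibonacciType

theorem eq_succ_of_isLeast_of_antitone {f : ℕ → ℝ} (hf : Antitone f) {k j g : ℕ} {θ : ℝ}
    (hg : IsLeast {n | k ≤ n ∧ f n < θ} g) (hk : k ≤ j + 1) (hlt : f (j + 1) < θ)
    (hle : θ ≤ f j) : g = j + 1 := by
  have h₁ : g ≤ j + 1 := hg.2 ⟨hk, hlt⟩
  have h₂ : j < g := hf.reflect_lt (hg.1.2.trans_le hle)
  omega

open FibonacciType in
theorem greedy_not_best_of_mem_interval_general (a : ℕ → ℕ) (ha0 : 0 < a 0) (h01 : a 0 ≤ a 1)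
    (hrec : ∀ n : ℕ, a (n + 2) = a (n + 1) + a n)
    (χ : ℤ) (hχ : χ = (a 0 : ℤ) ^ 2 + (a 1 : ℤ) * a 0 - (a 1 : ℤ) ^ 2) (hχpos : 0 < χ)
    (θ : ℝ)
    (m ξ : ℕ)
    (hξ : IsGreatest {k : ℕ |
      χ * (a (2 * m + 3 + k) : ℤ)
        ≤ (a (2 * m + 2) : ℤ) * (a (2 * m + 3) : ℤ) * (a (2 * m + 4) : ℤ)} ξ)
    (hlow : 1 / (a (2 * m + 3) : ℝ) + 1 / (a (2 * m + 4) : ℝ) < θ)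
    (hhigh : θ ≤ 1 / (a (2 * m + 2) : ℝ) + 1 / (a (2 * m + 3 + ξ) : ℝ))
    (g₁ g₂ : ℕ)
    (hg₁ : IsLeast {n : ℕ | 1 ≤ n ∧ 1 / (a n : ℝ) < θ} g₁)
    (hg₂ : IsLeast {n : ℕ | g₁ ≤ n ∧ 1 / (a n : ℝ) < θ - 1 / (a g₁ : ℝ)} g₂) :
    ∃ p q : ℕ, 1 ≤ p ∧ p ≤ q ∧ 1 / (a p : ℝ) + 1 / (a q : ℝ) < θ ∧
      1 / (a g₁ : ℝ) + 1 / (a g₂ : ℝ) < 1 / (a p : ℝ) + 1 / (a q : ℝ) := by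
  obtain rfl : χ = cassiniConst a := hχ
  have hpos := pos hrec ha0 (ha0.trans_le h01)
  have hmono := monotone hrec h01
  have hanti := antitone_one_div hpos hmono
  have hχR : (0 : ℝ) < cassiniConst a := mod_cast hχpos
  have := hpos (2 * m + 2)
  have := hpos (2 * m + 3)
  have := hpos (2 * m + 4)
  have hsplit := one_div_add_one_div_of_even hrec hpos (n := 2 * m + 2) ⟨m + 1, by ring⟩
  obtain rfl : g₁ = 2 * m + 2 := by
    refine eq_succ_of_isLeast_of_antitone hanti hg₁ (by omega) ?_ ?_
    · linarith [show (0 : ℝ) < cassiniConst a / (a (2 * m + 2) * a (2 * m + 3) * a (2 * m + 4))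
        by positivity]
    · linarith [hanti (show 2 * m + 3 ≤ 2 * m + 3 + ξ by omega),
        one_div_add_one_div_lt_of_odd hrec hpos hχpos (n := 2 * m + 1) ⟨m, rfl⟩]
  have hg₂_gt : 2 * m + 3 + ξ < g₂ := hanti.reflect_lt (hg₂.1.2.trans_le (by linarith))
  have hg₂_lt := one_div_lt_div_of_isGreatest hpos hmono hχpos (by positivity) hξ hg₂_gt
  push_cast at hg₂_lt
  exact ⟨2 * m + 3, 2 * m + 4, by omega, by omega, hlow, by linarith⟩

/-- If `θ` lies in the exceptional interval, then the greedy two-term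
underapproximation of `θ` is not optimal: the pair `(2m+3, 2m+4)` beats it. -/
theorem greedy_not_best_of_mem_interval (a : ℕ → ℕ) (ha0 : 0 < a 0) (h01 : a 0 ≤ a 1)
    (hrec : ∀ n : ℕ, a (n + 2) = a (n + 1) + a n)
    (χ : ℤ) (hχ : χ = (a 0 : ℤ) ^ 2 + (a 1 : ℤ) * a 0 - (a 1 : ℤ) ^ 2) (hχpos : 0 < χ)
    (θ : ℝ) (hθ : θ ∈ Set.Ioc (0 : ℝ) 1)
    (m ξ : ℕ)
    (hξ : IsGreatest {k : ℕ |
      χ * (a (2 * m + 3 + k) : ℤ)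
        ≤ (a (2 * m + 2) : ℤ) * (a (2 * m + 3) : ℤ) * (a (2 * m + 4) : ℤ)} ξ)
    (hlow : 1 / (a (2 * m + 3) : ℝ) + 1 / (a (2 * m + 4) : ℝ) < θ)
    (hhigh : θ ≤ 1 / (a (2 * m + 2) : ℝ) + 1 / (a (2 * m + 3 + ξ) : ℝ))
    (g₁ g₂ : ℕ)
    (hg₁ : IsLeast {n : ℕ | 1 ≤ n ∧ 1 / (a n : ℝ) < θ} g₁)
    (hg₂ : IsLeast {n : ℕ | g₁ ≤ n ∧ 1 / (a n : ℝ) < θ - 1 / (a g₁ : ℝ)} g₂) :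
    ∃ p q : ℕ, 1 ≤ p ∧ p ≤ q ∧ 1 / (a p : ℝ) + 1 / (a q : ℝ) < θ ∧
      1 / (a g₁ : ℝ) + 1 / (a g₂ : ℝ) < 1 / (a p : ℝ) + 1 / (a q : ℝ) :=
  greedy_not_best_of_mem_interval_general a ha0 h01 hrec χ hχ hχpos θ m ξ hξ hlow hhigh g₁ g₂ hg₁
    hg₂
end
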